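/- Let K be a field with char K ≠ 2 and let 𝔤 be a Lie algebra over K that can be generated by two elements. Then R(𝔤) = 0. -/

import Mathlib

/- Formalization of a statement from "Weak commutativity for Lie algebras"
   (arXiv:1808.10303). All Lie algebras are over a fixed field `K` with `char K ≠ 2`. -/

universe u v w

set_option linter.unusedVariables false

section WeakCommutativity

variable (K : Type u) [Field K] (g : Type v) [LieRing g] [LieAlgebra K g]

/-- The image of `x ∈ g` (first copy) in the free Lie algebra on two copies of `g`. -/
noncomputable def ofl (x : g) : FreeLieAlgebra K (g ⊕ g) := FreeLieAlgebra.of K (Sum.inl x)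

/-- The image of `xᵠ ∈ gᵠ` (second copy) in the free Lie algebra on two copies of `g`. -/
noncomputable def ofr (x : g) : FreeLieAlgebra K (g ⊕ g) := FreeLieAlgebra.of K (Sum.inr x)

/-- Relators presenting `χ(g)` as a quotient of the free Lie algebra on the disjoint union of
two copies of (the underlying type of) `g`: the relations presenting the free Lie product
(coproduct) of `g` and its copy `gᵠ`, together with the weak commutativity relations
`⁅x, xᵠ⁆ = 0` for all `x ∈ g`. -/
def chiRelators : Set (FreeLieAlgebra K (g ⊕ g)) :=
  { z | (∃ x y : g, z = ofl K g (x + y) - ofl K g x - ofl K g y)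
      ∨ (∃ (c : K) (x : g), z = ofl K g (c • x) - c • ofl K g x)
      ∨ (∃ x y : g, z = ofl K g ⁅x, y⁆ - ⁅ofl K g x, ofl K g y⁆)
      ∨ (∃ x y : g, z = ofr K g (x + y) - ofr K g x - ofr K g y)
      ∨ (∃ (c : K) (x : g), z = ofr K g (c • x) - c • ofr K g x)
      ∨ (∃ x y : g, z = ofr K g ⁅x, y⁆ - ⁅ofr K g x, ofr K g y⁆)
      ∨ (∃ x : g, z = ⁅ofl K g x, ofr K g x⁆) }

/-- The ideal of relations defining `χ(g)`. -/
noncomputable def chiIdeal : LieIdeal K (FreeLieAlgebra K (g ⊕ g)) :=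
  LieSubmodule.lieSpan K (FreeLieAlgebra K (g ⊕ g)) (chiRelators K g)

/-- Sidki's weak commutativity Lie algebra `χ(g)`: the quotient of the free Lie product of
two isomorphic copies `g`, `gᵠ` of `g` by the ideal generated by the brackets `⁅x, xᵠ⁆`. -/
abbrev chi : Type (max u v) := FreeLieAlgebra K (g ⊕ g) ⧸ chiIdeal K g

/-- The canonical image of `x ∈ g` (first copy) in `χ(g)`. -/
noncomputable def chiι (x : g) : chi K g :=
  LieSubmodule.Quotient.mk (N := chiIdeal K g) (ofl K g x)

/-- The canonical image of `xᵠ` (the second copy of `x ∈ g`) in `χ(g)`. -/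
noncomputable def chiψ (x : g) : chi K g :=
  LieSubmodule.Quotient.mk (N := chiIdeal K g) (ofr K g x)

/-- The ideal `L(g) ⊆ χ(g)`, generated by the elements `x - xᵠ` for `x ∈ g`. -/
noncomputable def chiL : LieIdeal K (chi K g) :=
  LieSubmodule.lieSpan K (chi K g) (Set.range fun x : g => chiι K g x - chiψ K g x)

/-- The ideal `R(g) = ⁅g, L(g), gᵠ⁆ ⊆ χ(g)`, generated by the triple brackets
`⁅x, ⁅ℓ, yᵠ⁆⁆` for `x, y ∈ g` and `ℓ ∈ L(g)`. -/
noncomputable def chiR : LieIdeal K (chi K g) :=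
  LieSubmodule.lieSpan K (chi K g)
    { z | ∃ (x y : g) (ℓ : chi K g), ℓ ∈ chiL K g ∧ z = ⁅chiι K g x, ⁅ℓ, chiψ K g y⁆⁆ }

end WeakCommutativity


/-! Write `t(x, y, z) = ⁅x, ⁅y - yᵠ, zᵠ⁆⁆`. Weak commutativity makes `t` vanish whenever two of its
arguments coincide, so `t` is alternating; by the Jacobi identity, the elements `x` with
`⁅x, w⁆ = 0` form a subalgebra, so `t` vanishes identically once it vanishes on a generating set.
With only two generators, every triple of generators has a repeated entry.

Knowing `t = 0` for both `(g, gᵠ)` and `(gᵠ, g)`, the span of the elements `c - cᵠ` and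
`⁅c - cᵠ, yᵠ⁆` is an ideal, hence contains `L(g)`. Bracketing it with `gᵠ` lands in the span of the
`⁅c - cᵠ, yᵠ⁆`, which `g` centralizes because `t = 0`. -/

section LieSpan

variable {K : Type u} [CommRing K] {L : Type v} [LieRing L] [LieAlgebra K L]
  {X : Type w} [LieRing X] [LieAlgebra K X]

theorem LieHom.lie_eq_zero_of_lieSpan_eq_top (f : L →ₗ⁅K⁆ X) {s : Set L}
    (hs : LieSubalgebra.lieSpan K L s = ⊤) {w : X} (h : ∀ x ∈ s, ⁅f x, w⁆ = 0) (x : L) :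
    ⁅f x, w⁆ = 0 := by
  have hx : x ∈ LieSubalgebra.lieSpan K L s := hs ▸ LieSubalgebra.mem_top x
  induction hx using LieSubalgebra.lieSpan_induction with
  | mem x hx => exact h x hx
  | zero => simp
  | add x y _ _ hx hy => simp [add_lie, hx, hy]
  | smul c x _ hx => simp [hx]
  | lie x y _ _ hx hy => rw [f.map_lie, lie_lie, hx, hy, lie_zero, lie_zero, sub_zero]

theorem lie_mem_of_mem_span {e : X} {S : Set X} {N : Submodule K X} (h : ∀ n ∈ S, ⁅e, n⁆ ∈ N)
    {n : X} (hn : n ∈ Submodule.span K S) : ⁅e, n⁆ ∈ N :=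
  (Submodule.span_le (p := N.comap (LieModule.toEnd K X X e)) |>.mpr h) hn

theorem lie_mem_of_lieSpan_eq_top {S : Set X} (hS : LieSubalgebra.lieSpan K X S = ⊤)
    {N : Submodule K X} (hN : ∀ e ∈ S, ∀ n ∈ N, ⁅e, n⁆ ∈ N) (x : X) {n : X} (hn : n ∈ N) :
    ⁅x, n⁆ ∈ N := by
  have hx : x ∈ LieSubalgebra.lieSpan K X S := hS ▸ LieSubalgebra.mem_top x
  induction hx using LieSubalgebra.lieSpan_induction generalizing n with
  | mem e he => exact hN e he n hn
  | zero => simp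
  | add x y _ _ hx hy => rw [add_lie]; exact add_mem (hx hn) (hy hn)
  | smul c x _ hx => rw [smul_lie]; exact N.smul_mem c (hx hn)
  | lie x y _ _ hx hy => rw [lie_lie]; exact sub_mem (hx (hy hn)) (hy (hx hn))

theorem FreeLieAlgebra.lieSpan_range_comp_of_eq_top_of_surjective {Y : Type*}
    {φ : FreeLieAlgebra K Y →ₗ⁅K⁆ X} (hφ : Function.Surjective φ) :
    LieSubalgebra.lieSpan K X (Set.range (φ ∘ FreeLieAlgebra.of K)) = ⊤ := by
  set A := LieSubalgebra.lieSpan K X (Set.range (φ ∘ FreeLieAlgebra.of K))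
  let ψ := FreeLieAlgebra.lift K fun y =>
    (⟨φ (FreeLieAlgebra.of K y), LieSubalgebra.subset_lieSpan ⟨y, rfl⟩⟩ : A)
  have hψ : A.incl.comp ψ = φ := FreeLieAlgebra.hom_ext fun y => by simp [ψ]
  refine eq_top_iff.mpr fun z _ => ?_
  obtain ⟨w, rfl⟩ := hφ z
  rw [← hψ]
  exact (ψ w).2

end LieSpan

section WeaklyCommute

variable {K : Type u} [CommRing K] {L : Type v} [LieRing L] [LieAlgebra K L]
  {X : Type w} [LieRing X] [LieAlgebra K X] {f p : L →ₗ⁅K⁆ X}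

def WeaklyCommute (f p : L →ₗ⁅K⁆ X) : Prop := ∀ x, ⁅f x, p x⁆ = 0

def commTriple (f p : L →ₗ⁅K⁆ X) (x y z : L) : X := ⁅f x, ⁅f y - p y, p z⁆⁆

namespace WeaklyCommute

variable (hfp : WeaklyCommute f p)
include hfp

theorem symm : WeaklyCommute p f := fun x => by rw [← _root_.lie_skew, hfp x, neg_zero]

theorem lie_skew (x y : L) : ⁅f x, p y⁆ = -⁅f y, p x⁆ := by
  have h := hfp (x + y)
  rw [map_add, map_add, add_lie, lie_add, lie_add, hfp x, hfp y, zero_add, add_zero] at h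
  exact eq_neg_of_add_eq_zero_left h

theorem lie_comm (x y : L) : ⁅p x, f y⁆ = ⁅f x, p y⁆ := by
  rw [hfp.lie_skew x y, ← _root_.lie_skew]

theorem commTriple_self_right (x y : L) : commTriple f p x y y = 0 := by
  rw [commTriple, sub_lie, hfp y, lie_self, sub_zero, lie_zero]

theorem commTriple_self_outer (x y : L) : commTriple f p x y x = 0 := by
  have hf : ⁅f x, ⁅f y, p x⁆⁆ = ⁅f ⁅x, y⁆, p x⁆ := by
    rw [leibniz_lie, hfp x, lie_zero, add_zero, ← LieHom.map_lie]
  have hp : ⁅f x, ⁅p y, p x⁆⁆ = ⁅f ⁅x, y⁆, p x⁆ := by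
    rw [← LieHom.map_lie, hfp.lie_skew x, ← _root_.lie_skew y x, map_neg, neg_lie, neg_neg]
  rw [commTriple, sub_lie, lie_sub, hf, hp, sub_self]

theorem commTriple_self_left (x z : L) : commTriple f p x x z = 0 := by
  have hp : ⁅f x, ⁅p x, p z⁆⁆ = ⁅f x, ⁅f x, p z⁆⁆ := by
    rw [← LieHom.map_lie, hfp.lie_skew x, LieHom.map_lie, lie_lie, hfp x, lie_zero, sub_zero,
      hfp.lie_skew z x, lie_neg, neg_neg]
  rw [commTriple, sub_lie, lie_sub, hp, sub_self]

theorem commTriple_swap_left (x y z : L) : commTriple f p x y z = -commTriple f p y x z := by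
  have h := hfp.commTriple_self_left (x + y) z
  simp only [commTriple, map_add, add_sub_add_comm, add_lie, lie_add] at h
  rw [eq_neg_iff_add_eq_zero, ← h, commTriple, commTriple,
    show ⁅f x, ⁅f x - p x, p z⁆⁆ = 0 from hfp.commTriple_self_left x z,
    show ⁅f y, ⁅f y - p y, p z⁆⁆ = 0 from hfp.commTriple_self_left y z]
  abel

theorem commTriple_swap_outer (x y z : L) : commTriple f p x y z = -commTriple f p z y x := by
  have h := hfp.commTriple_self_outer (x + z) y
  simp only [commTriple, map_add, add_lie, lie_add] at h
  rw [eq_neg_iff_add_eq_zero, ← h, commTriple, commTriple,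
    show ⁅f x, ⁅f y - p y, p x⁆⁆ = 0 from hfp.commTriple_self_outer x y,
    show ⁅f z, ⁅f y - p y, p z⁆⁆ = 0 from hfp.commTriple_self_outer z y]
  abel

theorem commTriple_eq_zero {a b : L} (hab : LieSubalgebra.lieSpan K L {a, b} = ⊤)
    (x y z : L) : commTriple f p x y z = 0 := by
  have base : ∀ x ∈ ({a, b} : Set L), ∀ y ∈ ({a, b} : Set L), ∀ z ∈ ({a, b} : Set L),
      commTriple f p x y z = 0 := by
    rintro x (rfl | rfl) y (rfl | rfl) z (rfl | rfl) <;>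
      first
        | exact hfp.commTriple_self_left _ _
        | exact hfp.commTriple_self_right _ _
        | exact hfp.commTriple_self_outer _ _
  have h₁ : ∀ x, ∀ y ∈ ({a, b} : Set L), ∀ z ∈ ({a, b} : Set L), commTriple f p x y z = 0 :=
    fun x y hy z hz => f.lie_eq_zero_of_lieSpan_eq_top hab (fun x hx => base x hx y hy z hz) x
  have h₂ : ∀ x y, ∀ z ∈ ({a, b} : Set L), commTriple f p x y z = 0 := fun x y z hz => by
    rw [hfp.commTriple_swap_left, neg_eq_zero]
    exact f.lie_eq_zero_of_lieSpan_eq_top hab (fun y hy =>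
      neg_eq_zero.mp <| (hfp.commTriple_swap_left x y z).symm.trans (h₁ x y hy z hz)) y
  rw [hfp.commTriple_swap_outer, neg_eq_zero]
  exact f.lie_eq_zero_of_lieSpan_eq_top hab (fun z hz =>
    neg_eq_zero.mp <| (hfp.commTriple_swap_outer x y z).symm.trans (h₂ x y z hz)) z

end WeaklyCommute

end WeaklyCommute

section DiffSpan

variable {K : Type u} [CommRing K] {L : Type v} [LieRing L] [LieAlgebra K L]
  {X : Type w} [LieRing X] [LieAlgebra K X] {f p : L →ₗ⁅K⁆ X}

def diffBracketSpan (f p : L →ₗ⁅K⁆ X) : Submodule K X :=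
  Submodule.span K (Set.range fun cy : L × L => ⁅f cy.1 - p cy.1, p cy.2⁆)

def diffSpan (f p : L →ₗ⁅K⁆ X) : Submodule K X :=
  Submodule.span K
    (Set.range (fun c => f c - p c) ∪ Set.range fun cy : L × L => ⁅f cy.1 - p cy.1, p cy.2⁆)

theorem diff_mem_diffSpan (c : L) : f c - p c ∈ diffSpan f p :=
  Submodule.subset_span (Or.inl ⟨c, rfl⟩)

theorem lie_diff_mem_diffSpan (c y : L) : ⁅f c - p c, p y⁆ ∈ diffSpan f p :=
  Submodule.subset_span (Or.inr ⟨(c, y), rfl⟩)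

theorem lie_diff_mem_diffBracketSpan (c y : L) : ⁅f c - p c, p y⁆ ∈ diffBracketSpan f p :=
  Submodule.subset_span ⟨(c, y), rfl⟩

theorem lie_eq_zero_of_mem_diffBracketSpan (hT : ∀ x y z, commTriple f p x y z = 0) (x : L)
    {n : X} (hn : n ∈ diffBracketSpan f p) : ⁅f x, n⁆ = 0 := by
  rw [← Submodule.mem_bot K]
  refine lie_mem_of_mem_span ?_ hn
  rintro _ ⟨⟨c, y⟩, rfl⟩
  exact (Submodule.mem_bot K).mpr (hT x c y)

namespace WeaklyCommute

variable (hfp : WeaklyCommute f p) (hT' : ∀ x y z, commTriple p f x y z = 0)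
include hfp hT'

theorem lie_diff_lie_right (c z w : L) :
    ⁅⁅f c - p c, p z⁆, p w⁆ = ⁅f ⁅c, z⁆ - p ⁅c, z⁆, p w⁆ := by
  have hz : ⁅f c - p c, p z⁆ = (f ⁅c, z⁆ - p ⁅c, z⁆) - ⁅f c - p c, f z⁆ := by
    rw [sub_lie, sub_lie, hfp.lie_comm, ← LieHom.map_lie, ← LieHom.map_lie]
    abel
  have hw : ⁅⁅f c - p c, f z⁆, p w⁆ = 0 := by
    rw [← _root_.lie_skew, ← neg_sub, neg_lie, lie_neg, neg_neg]
    exact hT' w c z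
  rw [hz, sub_lie, hw, sub_zero]

theorem lie_mem_diffBracketSpan (y : L) {n : X} (hn : n ∈ diffSpan f p) :
    ⁅n, p y⁆ ∈ diffBracketSpan f p := by
  rw [← _root_.lie_skew, neg_mem_iff]
  refine lie_mem_of_mem_span ?_ hn
  rintro _ (⟨c, rfl⟩ | ⟨⟨c, z⟩, rfl⟩) <;> rw [← _root_.lie_skew, neg_mem_iff]
  · exact lie_diff_mem_diffBracketSpan c y
  · rw [hfp.lie_diff_lie_right hT']
    exact lie_diff_mem_diffBracketSpan _ y

theorem lie_mem_diffSpan (hT : ∀ x y z, commTriple f p x y z = 0)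
    (hgen : LieSubalgebra.lieSpan K X (Set.range f ∪ Set.range p) = ⊤) (x : X) {n : X}
    (hn : n ∈ diffSpan f p) : ⁅x, n⁆ ∈ diffSpan f p := by
  have hfl : ∀ x c, ⁅f x, f c - p c⁆ = (f ⁅x, c⁆ - p ⁅x, c⁆) - ⁅f x - p x, p c⁆ := by
    intro x c
    rw [lie_sub, sub_lie, ← LieHom.map_lie, ← LieHom.map_lie]
    abel
  have hpl : ∀ u c, ⁅p u, f c - p c⁆ = ⁅f u - p u, p c⁆ := by
    intro u c
    rw [lie_sub, sub_lie, hfp.lie_comm, ← LieHom.map_lie]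
  refine lie_mem_of_lieSpan_eq_top hgen (fun e he n hn => lie_mem_of_mem_span ?_ hn) x hn
  rcases he with ⟨x, rfl⟩ | ⟨u, rfl⟩ <;> rintro _ (⟨c, rfl⟩ | ⟨⟨c, y⟩, rfl⟩)
  · rw [hfl]
    exact sub_mem (diff_mem_diffSpan _) (lie_diff_mem_diffSpan x c)
  · rw [show ⁅f x, ⁅f c - p c, p y⁆⁆ = 0 from hT x c y]
    exact zero_mem _
  · rw [hpl]
    exact lie_diff_mem_diffSpan u c
  · rw [leibniz_lie, hpl, hfp.lie_diff_lie_right hT', ← LieHom.map_lie]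
    exact add_mem (lie_diff_mem_diffSpan _ y) (lie_diff_mem_diffSpan c _)

theorem lie_lie_eq_zero_of_mem_lieSpan (hT : ∀ x y z, commTriple f p x y z = 0)
    (hgen : LieSubalgebra.lieSpan K X (Set.range f ∪ Set.range p) = ⊤) {ℓ : X}
    (hℓ : ℓ ∈ LieSubmodule.lieSpan K X (Set.range fun c => f c - p c)) (x y : L) :
    ⁅f x, ⁅ℓ, p y⁆⁆ = 0 := by
  let I : LieIdeal K X :=
    { diffSpan f p with lie_mem := fun hn => hfp.lie_mem_diffSpan hT' hT hgen _ hn }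
  have hℓI : ℓ ∈ I := by
    refine LieSubmodule.lieSpan_le.mpr ?_ hℓ
    rintro _ ⟨c, rfl⟩
    exact diff_mem_diffSpan c
  exact lie_eq_zero_of_mem_diffBracketSpan hT x (hfp.lie_mem_diffBracketSpan hT' y hℓI)

end WeaklyCommute

end DiffSpan

section Chi

variable (K : Type u) [Field K] (g : Type v) [LieRing g] [LieAlgebra K g]

noncomputable def chiMk : FreeLieAlgebra K (g ⊕ g) →ₗ⁅K⁆ chi K g :=
  { (chiIdeal K g).toSubmodule.mkQ with map_lie' := rfl }

variable {K g} in
theorem chiMk_eq_zero_of_mem {z : FreeLieAlgebra K (g ⊕ g)} (hz : z ∈ chiRelators K g) :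
    chiMk K g z = 0 :=
  (Submodule.Quotient.mk_eq_zero _).mpr (LieSubmodule.subset_lieSpan hz)

noncomputable def chiHomOfRelators (e : g → FreeLieAlgebra K (g ⊕ g))
    (hadd : ∀ x y, e (x + y) - e x - e y ∈ chiRelators K g)
    (hsmul : ∀ (c : K) x, e (c • x) - c • e x ∈ chiRelators K g)
    (hlie : ∀ x y, e ⁅x, y⁆ - ⁅e x, e y⁆ ∈ chiRelators K g) : g →ₗ⁅K⁆ chi K g where
  toFun x := chiMk K g (e x)
  map_add' x y := by
    simpa only [map_sub, map_add, sub_sub, sub_eq_zero] using chiMk_eq_zero_of_mem (hadd x y)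
  map_smul' c x := by
    simpa only [map_sub, map_smul, sub_eq_zero, RingHom.id_apply] using
      chiMk_eq_zero_of_mem (hsmul c x)
  map_lie' {x y} := by
    simpa only [map_sub, LieHom.map_lie, sub_eq_zero] using chiMk_eq_zero_of_mem (hlie x y)

noncomputable def chiιHom : g →ₗ⁅K⁆ chi K g :=
  chiHomOfRelators K g (ofl K g) (fun x y => Or.inl ⟨x, y, rfl⟩)
    (fun c x => Or.inr <| Or.inl ⟨c, x, rfl⟩) (fun x y => Or.inr <| Or.inr <| Or.inl ⟨x, y, rfl⟩)

noncomputable def chiψHom : g →ₗ⁅K⁆ chi K g :=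
  chiHomOfRelators K g (ofr K g) (fun x y => Or.inr <| Or.inr <| Or.inr <| Or.inl ⟨x, y, rfl⟩)
    (fun c x => Or.inr <| Or.inr <| Or.inr <| Or.inr <| Or.inl ⟨c, x, rfl⟩)
    (fun x y => Or.inr <| Or.inr <| Or.inr <| Or.inr <| Or.inr <| Or.inl ⟨x, y, rfl⟩)

theorem weaklyCommute_chiιHom_chiψHom : WeaklyCommute (chiιHom K g) (chiψHom K g) := fun x =>
  chiMk_eq_zero_of_mem (Or.inr <| Or.inr <| Or.inr <| Or.inr <| Or.inr <| Or.inr ⟨x, rfl⟩)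

theorem lieSpan_range_chiιHom_union_range_chiψHom :
    LieSubalgebra.lieSpan K (chi K g)
      (Set.range (chiιHom K g) ∪ Set.range (chiψHom K g)) = ⊤ := by
  have h : chiMk K g ∘ FreeLieAlgebra.of K = Sum.elim (chiιHom K g) (chiψHom K g) := by
    funext x
    rcases x with x | x <;> rfl
  rw [← Set.Sum.elim_range, ← h]
  exact FreeLieAlgebra.lieSpan_range_comp_of_eq_top_of_surjective (Submodule.mkQ_surjective _)

end Chi

theorem chi_R_eq_bot_of_two_generated_general
    (K : Type u) [Field K]
    (g : Type v) [LieRing g] [LieAlgebra K g]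
    (hgen : ∃ a b : g, LieSubalgebra.lieSpan K g {a, b} = ⊤) :
    chiR K g = ⊥ := by
  obtain ⟨a, b, hab⟩ := hgen
  have hwc := weaklyCommute_chiιHom_chiψHom K g
  rw [chiR, LieSubmodule.lieSpan_eq_bot_iff]
  rintro _ ⟨x, y, ℓ, hℓ, rfl⟩
  exact hwc.lie_lie_eq_zero_of_mem_lieSpan (hwc.symm.commTriple_eq_zero hab)
    (hwc.commTriple_eq_zero hab) (lieSpan_range_chiιHom_union_range_chiψHom K g) hℓ x y

/-- If the Lie algebra `g` can be generated by two elements, then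
`R(g) = 0`. -/
theorem chi_R_eq_bot_of_two_generated
    (K : Type u) [Field K] (hchar : ringChar K ≠ 2)
    (g : Type v) [LieRing g] [LieAlgebra K g]
    (hgen : ∃ a b : g, LieSubalgebra.lieSpan K g {a, b} = ⊤) :
    chiR K g = ⊥ :=
  chi_R_eq_bot_of_two_generated_general K g hgen
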